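/- Let R:(0,∞)→ℂ be smooth with compact support in [1,2], X ≥ 1, 1 ≤ u < X^{1/2}, ℓ ∈ ℤ, and β ∈ {1, 1+λ³} (mod 4). Then Σ_{4,β}(X,ℓ,u) = 0. -/

import Mathlib

open scoped ComplexConjugate Classical
open UniqueFactorizationMonoid

noncomputable section

abbrev ZI := GaussianInt

namespace QuarticGauss

/-- `λ = 1 + i`, the ramified prime of `ℤ[i]`. -/
def lam : ZI := ⟨1, 1⟩

/-- `ě(z) = e(z + z̄)`. -/
def eCheck (z : ℂ) : ℂ := Complex.exp (2 * Real.pi * Complex.I * (z + conj z))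

/-- The quartic residue character at a prime `p` of `ℤ[i]`: the unique fourth root of
unity congruent to `a ^ ((N p - 1)/4)` modulo `p` (and `0` if there is none). -/
def quarticCharPrime (a p : ZI) : ZI :=
  if h : ∃ u : ZI, (u = 1 ∨ u = ⟨0, 1⟩ ∨ u = -1 ∨ u = ⟨0, -1⟩) ∧
      p ∣ a ^ ((p.norm.natAbs - 1) / 4) - u then h.choose else 0

/-- The quartic residue symbol `(a/c)₄`, extended multiplicatively in the denominator
over a prime factorisation of `c`; it vanishes if `gcd (a, c) ≠ 1`. -/
def quarticSymbol (a c : ZI) : ZI :=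
  ((factors c).map fun p => quarticCharPrime a p).prod

/-- The quadratic residue symbol `(a/c)₂ = (a/c)₄²`. -/
def quadraticSymbol (a c : ZI) : ZI := quarticSymbol a c ^ 2

/-- The quartic Gauss sum `g₄(ν, c) = Σ_{d mod c} (d/c)₄ ě(νd/c)`. -/
def g4 (ν c : ZI) : ℂ :=
  ∑ᶠ d : ZI ⧸ Ideal.span {c},
    GaussianInt.toComplex (quarticSymbol d.out c) *
      eCheck (GaussianInt.toComplex (ν * d.out) / GaussianInt.toComplex c)

/-- The quadratic Gauss sum `g₂(ν, c) = Σ_{d mod c} (d/c)₂ ě(νd/c)`. -/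
def g2 (ν c : ZI) : ℂ :=
  ∑ᶠ d : ZI ⧸ Ideal.span {c},
    GaussianInt.toComplex (quadraticSymbol d.out c) *
      eCheck (GaussianInt.toComplex (ν * d.out) / GaussianInt.toComplex c)

/-- The normalised quartic Gauss sum `g̃₄(ν, c) = N(c)^{-1/2} g₄(ν, c)`. -/
def g4t (ν c : ZI) : ℂ := g4 ν c / (Real.sqrt (c.norm : ℝ) : ℂ)

/-- The unitary Grössencharacter `c ↦ c̄ / |c|` (as a complex number). -/
def gch (c : ZI) : ℂ :=
  conj (GaussianInt.toComplex c) / (‖GaussianInt.toComplex c‖ : ℂ)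

/-- The von Mangoldt function on `ℤ[i]`. -/
def vMangoldt (c : ZI) : ℝ :=
  if h : ∃ p : ZI, Prime p ∧ ∃ k : ℕ, 1 ≤ k ∧ Associated c (p ^ k) then
    Real.log ((h.choose.norm.natAbs : ℝ))
  else 0

/-- The Möbius function on `ℤ[i]`. -/
def mu (c : ZI) : ℤ :=
  if Squarefree c then (-1) ^ Multiset.card (factors c) else 0

/-- `C(a, b) = ((N a - 1)/4) ((N b - 1)/4)`. -/
def Cf (a b : ZI) : ℤ := ((a.norm - 1) / 4) * ((b.norm - 1) / 4)

/-- `φ(c)`: the number of invertible residue classes modulo `c`. -/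
def totient (c : ZI) : ℕ := Nat.card ((ZI ⧸ Ideal.span {c})ˣ)

end QuarticGauss

namespace QuarticGauss

/-- The generic trilinear sum `Σ_{a,b,c ≡ 1 (λ³), abc ≡ β (4), Q(a,b,c)}
`Λ(a) μ(b) g̃₄(abc) (conj(abc)/|abc|)^ℓ R(N(abc)/X)`. -/
def SigmaGen (R : ℝ → ℂ) (X : ℝ) (l : ℤ) (β : ZI) (Q : ZI → ZI → ZI → Prop) : ℂ :=
  ∑ᶠ t ∈ {t : ZI × ZI × ZI |
      lam ^ 3 ∣ (t.1 - 1) ∧ lam ^ 3 ∣ (t.2.1 - 1) ∧ lam ^ 3 ∣ (t.2.2 - 1) ∧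
      (4 : ZI) ∣ (t.1 * t.2.1 * t.2.2 - β) ∧ Q t.1 t.2.1 t.2.2},
    (vMangoldt t.1 : ℂ) * (mu t.2.1 : ℂ) * g4t 1 (t.1 * t.2.1 * t.2.2) *
      gch (t.1 * t.2.1 * t.2.2) ^ l * R (((t.1 * t.2.1 * t.2.2).norm : ℝ) / X)

/-- `Σ_{0,β}(X,ℓ,u)`: restriction `N(bc) ≤ u`. -/
def Sigma0 (R : ℝ → ℂ) (X : ℝ) (l : ℤ) (β : ZI) (u : ℝ) : ℂ :=
  SigmaGen R X l β fun _ b c => ((b * c).norm : ℝ) ≤ u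

/-- `Σ_{1,β}(X,ℓ,u)`: restriction `N(b) ≤ u`. -/
def Sigma1 (R : ℝ → ℂ) (X : ℝ) (l : ℤ) (β : ZI) (u : ℝ) : ℂ :=
  SigmaGen R X l β fun _ b _ => ((b.norm : ℝ)) ≤ u

/-- `Σ_{2′,β}(X,ℓ,u)`: restriction `N(ab) ≤ u`. -/
def Sigma2' (R : ℝ → ℂ) (X : ℝ) (l : ℤ) (β : ZI) (u : ℝ) : ℂ :=
  SigmaGen R X l β fun a b _ => (((a * b).norm : ℝ)) ≤ u

/-- `Σ_{2″,β}(X,ℓ,u)`: restriction `N(a) ≤ u`, `N(b) ≤ u`, `N(ab) > u`. -/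
def Sigma2'' (R : ℝ → ℂ) (X : ℝ) (l : ℤ) (β : ZI) (u : ℝ) : ℂ :=
  SigmaGen R X l β fun a b _ =>
    ((a.norm : ℝ)) ≤ u ∧ ((b.norm : ℝ)) ≤ u ∧ u < (((a * b).norm : ℝ))

/-- `Σ_{3,β}(X,ℓ,u)`: restriction `N(b) ≤ u`, `N(a) > u`, `N(bc) > u`. -/
def Sigma3 (R : ℝ → ℂ) (X : ℝ) (l : ℤ) (β : ZI) (u : ℝ) : ℂ :=
  SigmaGen R X l β fun a b c =>
    ((b.norm : ℝ)) ≤ u ∧ u < ((a.norm : ℝ)) ∧ u < (((b * c).norm : ℝ))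

/-- `Σ_{4,β}(X,ℓ,u)`: restriction `N(a) ≤ u`, `N(bc) ≤ u`. -/
def Sigma4 (R : ℝ → ℂ) (X : ℝ) (l : ℤ) (β : ZI) (u : ℝ) : ℂ :=
  SigmaGen R X l β fun a b c => ((a.norm : ℝ)) ≤ u ∧ (((b * c).norm : ℝ)) ≤ u

/-- `H_β(X,ℓ) = Σ_{c ≡ β (4)} g̃₄(c) (c̄/|c|)^ℓ Λ(c) R(N(c)/X)`. -/
def Hsum (R : ℝ → ℂ) (X : ℝ) (l : ℤ) (β : ZI) : ℂ :=
  ∑ᶠ c ∈ {c : ZI | (4 : ZI) ∣ (c - β)},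
    g4t 1 c * gch c ^ l * (vMangoldt c : ℂ) * R ((c.norm : ℝ) / X)

/-- `F_β(x,ℓ;α) = Σ_{c ≡ β (4), α ∣ c} g̃₄(c) (c̄/|c|)^ℓ R(N(c)/x)`. -/
def Fsum (R : ℝ → ℂ) (x : ℝ) (l : ℤ) (β α : ZI) : ℂ :=
  ∑ᶠ c ∈ {c : ZI | (4 : ZI) ∣ (c - β) ∧ α ∣ c},
    g4t 1 c * gch c ^ l * R ((c.norm : ℝ) / x)

end QuarticGauss

namespace QuarticGauss

theorem statement7 (R : ℝ → ℂ) (hR : ContDiff ℝ (⊤ : ℕ∞) R) (hRsupp : tsupport R ⊆ Set.Icc 1 2)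
    (X : ℝ) (hX : 1 ≤ X) (u : ℝ) (hu : 1 ≤ u) (hu' : u < Real.sqrt X) (l : ℤ) (β : ZI)
    (hβ : β = 1 ∨ β = 1 + lam ^ 3) :
    Sigma4 R X l β u = 0 := by
  have hX0 : (0:ℝ) < X := lt_of_lt_of_le one_pos hX
  unfold Sigma4 SigmaGen
  apply finsum_mem_of_eqOn_zero
  rintro ⟨a, b, c⟩ ⟨-, -, -, -, ha, hbc⟩
  have hRz : R (((a * b * c).norm : ℝ) / X) = 0 := by
    have hnn : (0:ℝ) ≤ ((a.norm : ℝ)) := by exact_mod_cast a.norm_nonneg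
    have hnn2 : (0:ℝ) ≤ (((b*c).norm : ℝ)) := by exact_mod_cast (b*c).norm_nonneg
    have hmul : ((a * b * c).norm : ℝ) = (a.norm : ℝ) * ((b*c).norm : ℝ) := by
      rw [mul_assoc]; push_cast [Zsqrtd.norm_mul]; ring
    have hle : ((a * b * c).norm : ℝ) ≤ u * u := by
      rw [hmul]
      exact mul_le_mul ha hbc hnn2 (le_trans (by norm_num) hu)
    have hltX : ((a * b * c).norm : ℝ) < X := by
      have : u * u < Real.sqrt X * Real.sqrt X :=
        mul_self_lt_mul_self (by linarith) hu'
      rw [Real.mul_self_sqrt hX0.le] at this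
      linarith
    have hlt1 : ((a * b * c).norm : ℝ) / X < 1 := by
      rw [div_lt_one hX0]; exact hltX
    by_contra h
    have hmem : ((a * b * c).norm : ℝ) / X ∈ tsupport R :=
      subset_closure (by simpa [Function.mem_support] using h)
    have := hRsupp hmem
    exact absurd this.1 (not_le.mpr hlt1)
  exact mul_eq_zero_of_right _ hRz

end QuarticGauss
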